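/- arXiv:2304.02242 — 4 statements merged into one kernel-verified Lean document; each statement's English description precedes it below -/
import Mathlib

section
/- In the algebra A' = k⟨x,y,z⟩/(yz−αzy+x², zx−αxz, xy−αyx), for every natural number j one has z·y^j = α^{−j}·y^j·z + α^{−3j+2}·(∑_{ν=0}^{j−1} α^{3ν})·x²·y^{j−1}, where the sum is 0 when j = 0. -/
noncomputable section

/-- Defining relations of the Type S' Calabi–Yau quantum polynomial algebra
`A' = k⟨x,y,z⟩/(yz - αzy + x², zx - αxz, xy - αyx)`. -/
inductive SRel {k : Type} [Field k] (α : k) :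
    FreeAlgebra k (Fin 3) → FreeAlgebra k (Fin 3) → Prop
  | g1 : SRel α (FreeAlgebra.ι k 1 * FreeAlgebra.ι k 2)
      (α • (FreeAlgebra.ι k 2 * FreeAlgebra.ι k 1) - FreeAlgebra.ι k 0 * FreeAlgebra.ι k 0)
  | g2 : SRel α (FreeAlgebra.ι k 2 * FreeAlgebra.ι k 0)
      (α • (FreeAlgebra.ι k 0 * FreeAlgebra.ι k 2))
  | g3 : SRel α (FreeAlgebra.ι k 0 * FreeAlgebra.ι k 1)
      (α • (FreeAlgebra.ι k 1 * FreeAlgebra.ι k 0))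

/-- The image of `x` in `A'`. -/
def SX {k : Type} [Field k] (α : k) : RingQuot (SRel α) :=
  RingQuot.mkAlgHom k (SRel α) (FreeAlgebra.ι k 0)

/-- The image of `y` in `A'`. -/
def SY {k : Type} [Field k] (α : k) : RingQuot (SRel α) :=
  RingQuot.mkAlgHom k (SRel α) (FreeAlgebra.ι k 1)

/-- The image of `z` in `A'`. -/
def SZ {k : Type} [Field k] (α : k) : RingQuot (SRel α) :=
  RingQuot.mkAlgHom k (SRel α) (FreeAlgebra.ι k 2)

/-- The central element `g = xyz + (1-α³)⁻¹ x³` of `A'`. -/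
def SG {k : Type} [Field k] (α : k) : RingQuot (SRel α) :=
  SX α * SY α * SZ α + (1 - α ^ 3)⁻¹ • (SX α) ^ 3

/-!
Write `β = α⁻¹`. The relations give `z y = β y z + β x²` and `y x² = β² x² y`. Pushing `z` to the
right through `y^j` one factor at a time, each step leaves a term `x² y^(j-1)`, and carrying the
earlier such terms past the remaining `y`s multiplies their coefficients by `β³`; so the coefficient
of `x² y^(j-1)` is `∑_{i<j} β^(3i+1)`, which is the stated geometric sum read backwards.
-/

def QCommute {R A : Type*} [CommSemiring R] [Semiring A] [Algebra R A] (q : R) (a b : A) :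
    Prop :=
  a * b = q • (b * a)

namespace QCommute

variable {R A : Type*} [CommSemiring R] [Semiring A] [Algebra R A] {q : R} {a b : A}

theorem pow_left (h : QCommute q a b) (n : ℕ) : QCommute (q ^ n) (a ^ n) b := by
  induction n with
  | zero => simp [QCommute]
  | succ n ih =>
    unfold QCommute at h ih ⊢
    rw [pow_succ, mul_assoc, h, mul_smul_comm, ← mul_assoc, ih, smul_mul_assoc, smul_smul,
      mul_assoc, ← pow_succ, ← pow_succ']

theorem pow_right (h : QCommute q a b) (n : ℕ) : QCommute (q ^ n) a (b ^ n) := by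
  induction n with
  | zero => simp [QCommute]
  | succ n ih =>
    unfold QCommute at h ih ⊢
    rw [pow_succ, ← mul_assoc, ih, smul_mul_assoc, mul_assoc, h, mul_smul_comm, smul_smul,
      ← mul_assoc, ← pow_succ, pow_succ']

end QCommute

theorem mul_pow_succ_eq_of_mul_eq_smul_add_smul {R A : Type*} [CommSemiring R] [Semiring A]
    [Algebra R A] {β : R} {w y z : A} (hzy : z * y = β • (y * z) + β • w)
    (hyw : QCommute (β ^ 2) y w) (j : ℕ) :
    z * y ^ (j + 1) =
      β ^ (j + 1) • (y ^ (j + 1) * z) +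
        (∑ i ∈ Finset.range (j + 1), β ^ (3 * i + 1)) • (w * y ^ j) := by
  induction j with
  | zero => simpa using hzy
  | succ j ih =>
    have hyjw : y ^ (j + 1) * w = (β ^ 2) ^ (j + 1) • (w * y ^ (j + 1)) := hyw.pow_left (j + 1)
    calc z * y ^ (j + 2)
        = β ^ (j + 1) • (y ^ (j + 1) * (z * y)) +
            (∑ i ∈ Finset.range (j + 1), β ^ (3 * i + 1)) • (w * y ^ (j + 1)) := by
          rw [pow_succ y (j + 1), ← mul_assoc, ih, add_mul, smul_mul_assoc, smul_mul_assoc,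
            mul_assoc, mul_assoc, ← pow_succ]
      _ = _ := by
          rw [hzy, mul_add, mul_smul_comm, mul_smul_comm, ← mul_assoc, ← pow_succ, hyjw,
            Finset.sum_range_succ _ (j + 1)]
          match_scalars <;> ring

theorem sum_range_inv_pow_three_mul_add_one {K : Type*} [Field K] {α : K} (hα : α ≠ 0)
    (j : ℕ) :
    ∑ i ∈ Finset.range j, α⁻¹ ^ (3 * i + 1) =
      α⁻¹ ^ (3 * j) * α ^ 2 * ∑ ν ∈ Finset.range j, α ^ (3 * ν) := by
  induction j with
  | zero => simp
  | succ j ih =>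
    calc ∑ i ∈ Finset.range (j + 1), α⁻¹ ^ (3 * i + 1)
        = α⁻¹ ^ 3 * ∑ i ∈ Finset.range j, α⁻¹ ^ (3 * i + 1) + α⁻¹ := by
          rw [Finset.sum_range_succ', Finset.mul_sum]
          congr 1
          · exact Finset.sum_congr rfl fun i _ => by ring
          · simp
      _ = α⁻¹ ^ (3 * (j + 1)) * α ^ 2 * ∑ ν ∈ Finset.range (j + 1), α ^ (3 * ν) := by
          rw [ih, Finset.sum_range_succ]
          simp only [inv_pow]
          field_simp
          ring

section Relations

variable {k : Type} [Field k] (α : k)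

theorem SY_mul_SZ : SY α * SZ α = α • (SZ α * SY α) - SX α * SX α := by
  simpa [SX, SY, SZ] using RingQuot.mkAlgHom_rel k (SRel.g1 (α := α))

theorem SX_mul_SY : SX α * SY α = α • (SY α * SX α) := by
  simpa [SX, SY] using RingQuot.mkAlgHom_rel k (SRel.g3 (α := α))

variable {α} (hα : α ≠ 0)
include hα

theorem SZ_mul_SY : SZ α * SY α = α⁻¹ • (SY α * SZ α) + α⁻¹ • SX α ^ 2 := by
  rw [← smul_add, SY_mul_SZ, pow_two, sub_add_cancel, inv_smul_smul₀ hα]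

theorem qCommute_SY_SX : QCommute α⁻¹ (SY α) (SX α) := by
  rw [QCommute, SX_mul_SY, inv_smul_smul₀ hα]

end Relations

theorem stmt2_general {k : Type} [Field k] (α : k)
    (hα : α ≠ 0) (j : ℕ) :
    SZ α * (SY α) ^ j =
      (α⁻¹) ^ j • ((SY α) ^ j * SZ α) +
      ((α⁻¹) ^ (3 * j) * α ^ 2 * ∑ ν ∈ Finset.range j, α ^ (3 * ν)) •
        ((SX α) ^ 2 * (SY α) ^ (j - 1)) := by
  cases j with
  | zero => simp
  | succ j =>
    rw [← sum_range_inv_pow_three_mul_add_one hα, Nat.add_sub_cancel]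
    exact mul_pow_succ_eq_of_mul_eq_smul_add_smul (SZ_mul_SY hα)
      (by simpa using (qCommute_SY_SX hα).pow_right 2) j

theorem stmt2 {k : Type} [Field k] [IsAlgClosed k] [CharZero k] (α : k)
    (hα : α ≠ 0) (hα3 : α ^ 3 ≠ 1) (j : ℕ) :
    SZ α * (SY α) ^ j =
      (α⁻¹) ^ j • ((SY α) ^ j * SZ α) +
      ((α⁻¹) ^ (3 * j) * α ^ 2 * ∑ ν ∈ Finset.range j, α ^ (3 * ν)) •
        ((SX α) ^ 2 * (SY α) ^ (j - 1)) :=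
  stmt2_general α hα j
end
end

section
/- In the algebra A' = k⟨x,y,z⟩/(yz−αzy+x², zx−αxz, xy−αyx) with α³ ≠ 0,1, writing g^n = ∑_{j=0}^{n} κ^n_{3n−2j,j,j}·x^{3n−2j}·y^j·z^j where g = xyz + (1−α³)^{−1}x³, the extreme coefficients satisfy κ^n_{n,n,n} = α^{−n(n−1)/2} and κ^n_{3n,0,0} = (1−α³)^{−n} for all n ≥ 1. -/
noncomputable section

namespace StmtAux

variable {k : Type} [Field k] (α : k)

lemma hYZ : SY α * SZ α = α • (SZ α * SY α) - SX α * SX α := by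
  have h := RingQuot.mkAlgHom_rel k (SRel.g1 (α := α))
  simpa [SX, SY, SZ, map_mul, map_sub, map_smul] using h

lemma hZX : SZ α * SX α = α • (SX α * SZ α) := by
  have h := RingQuot.mkAlgHom_rel k (SRel.g2 (α := α))
  simpa [SX, SY, SZ, map_mul, map_smul] using h

lemma hXY : SX α * SY α = α • (SY α * SX α) := by
  have h := RingQuot.mkAlgHom_rel k (SRel.g3 (α := α))
  simpa [SX, SY, SZ, map_mul, map_smul] using h

variable {α}

lemma hYX (hα : α ≠ 0) : SY α * SX α = α⁻¹ • (SX α * SY α) := by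
  rw [hXY α, smul_smul, inv_mul_cancel₀ hα, one_smul]

lemma hZY (hα : α ≠ 0) : SZ α * SY α = α⁻¹ • (SY α * SZ α + SX α * SX α) := by
  have h : α • (SZ α * SY α) = SY α * SZ α + SX α * SX α := by
    rw [hYZ α]; abel
  calc SZ α * SY α = α⁻¹ • (α • (SZ α * SY α)) := by
        rw [smul_smul, inv_mul_cancel₀ hα, one_smul]
    _ = _ := by rw [h]

lemma ZpowX (j : ℕ) : SZ α ^ j * SX α = α ^ j • (SX α * SZ α ^ j) := by
  induction j with
  | zero => simp
  | succ j ih =>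
    calc SZ α ^ (j+1) * SX α = SZ α ^ j * (SZ α * SX α) := by
          rw [pow_succ, mul_assoc]
      _ = α • (SZ α ^ j * SX α * SZ α) := by
          rw [hZX α, mul_smul_comm, mul_assoc]
      _ = α • (α ^ j • (SX α * SZ α ^ j) * SZ α) := by rw [ih]
      _ = (α ^ (j+1)) • (SX α * SZ α ^ (j+1)) := by
          rw [smul_mul_assoc, smul_smul, mul_assoc, ← pow_succ, ← pow_succ']

lemma YpowX (hα : α ≠ 0) (j : ℕ) : SY α ^ j * SX α = (α⁻¹) ^ j • (SX α * SY α ^ j) := by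
  induction j with
  | zero => simp
  | succ j ih =>
    calc SY α ^ (j+1) * SX α = SY α ^ j * (SY α * SX α) := by
          rw [pow_succ, mul_assoc]
      _ = α⁻¹ • (SY α ^ j * SX α * SY α) := by
          rw [hYX hα, mul_smul_comm, mul_assoc]
      _ = α⁻¹ • ((α⁻¹) ^ j • (SX α * SY α ^ j) * SY α) := by rw [ih]
      _ = ((α⁻¹) ^ (j+1)) • (SX α * SY α ^ (j+1)) := by
          rw [smul_mul_assoc, smul_smul, mul_assoc, ← pow_succ, ← pow_succ']

lemma YZpowX (hα : α ≠ 0) (j : ℕ) :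
    SY α ^ j * SZ α ^ j * SX α = SX α * (SY α ^ j * SZ α ^ j) := by
  calc SY α ^ j * SZ α ^ j * SX α = SY α ^ j * (SZ α ^ j * SX α) := by rw [mul_assoc]
    _ = α ^ j • (SY α ^ j * SX α * SZ α ^ j) := by
        rw [ZpowX, mul_smul_comm, mul_assoc]
    _ = α ^ j • ((α⁻¹) ^ j • (SX α * SY α ^ j) * SZ α ^ j) := by rw [YpowX hα]
    _ = (α ^ j * (α⁻¹) ^ j) • (SX α * (SY α ^ j * SZ α ^ j)) := by
        rw [smul_mul_assoc, smul_smul, mul_assoc]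
    _ = SX α * (SY α ^ j * SZ α ^ j) := by
        rw [← mul_pow, mul_inv_cancel₀ hα, one_pow, one_smul]

lemma ZpowXX (j : ℕ) :
    SZ α ^ j * (SX α * SX α) = (α ^ j * α ^ j) • (SX α * SX α * SZ α ^ j) := by
  calc SZ α ^ j * (SX α * SX α) = SZ α ^ j * SX α * SX α := by rw [mul_assoc]
    _ = α ^ j • (SX α * SZ α ^ j) * SX α := by rw [ZpowX]
    _ = α ^ j • (SX α * (SZ α ^ j * SX α)) := by rw [smul_mul_assoc, mul_assoc]
    _ = α ^ j • (SX α * (α ^ j • (SX α * SZ α ^ j))) := by rw [ZpowX]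
    _ = (α ^ j * α ^ j) • (SX α * SX α * SZ α ^ j) := by
        rw [mul_smul_comm, smul_smul, ← mul_assoc]

lemma YpowXX (hα : α ≠ 0) (j : ℕ) :
    SY α ^ j * (SX α * SX α) = ((α⁻¹) ^ j * (α⁻¹) ^ j) • (SX α * SX α * SY α ^ j) := by
  calc SY α ^ j * (SX α * SX α) = SY α ^ j * SX α * SX α := by rw [mul_assoc]
    _ = (α⁻¹) ^ j • (SX α * SY α ^ j) * SX α := by rw [YpowX hα]
    _ = (α⁻¹) ^ j • (SX α * (SY α ^ j * SX α)) := by rw [smul_mul_assoc, mul_assoc]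
    _ = (α⁻¹) ^ j • (SX α * ((α⁻¹) ^ j • (SX α * SY α ^ j))) := by rw [YpowX hα]
    _ = ((α⁻¹) ^ j * (α⁻¹) ^ j) • (SX α * SX α * SY α ^ j) := by
        rw [mul_smul_comm, smul_smul, ← mul_assoc]

def bfun (α : k) : ℕ → k
  | 0 => 0
  | j + 1 => α⁻¹ * bfun α j + α⁻¹ * α ^ (2 * j)

lemma ZpowYZ (hα : α ≠ 0) (j : ℕ) :
    SZ α ^ j * (SY α * SZ α) =
      (α⁻¹) ^ j • (SY α * SZ α ^ (j + 1)) + bfun α j • (SX α * SX α * SZ α ^ j) := by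
  induction j with
  | zero => simp [bfun]
  | succ j ih =>
    have step1 : SZ α ^ (j+1) * (SY α * SZ α) = SZ α ^ j * (SZ α * SY α) * SZ α := by
      rw [pow_succ, mul_assoc, mul_assoc, mul_assoc]
    have step2 : SZ α ^ j * (SZ α * SY α) * SZ α
        = α⁻¹ • (SZ α ^ j * (SY α * SZ α) * SZ α + SZ α ^ j * (SX α * SX α) * SZ α) := by
      rw [hZY hα, mul_smul_comm, smul_mul_assoc, mul_add, add_mul]
    rw [step1, step2, ih, ZpowXX]
    have e1 : SY α * SZ α ^ (j+1) * SZ α = SY α * SZ α ^ (j+1+1) := by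
      rw [mul_assoc, ← pow_succ]
    have e2 : SX α * SX α * SZ α ^ j * SZ α = SX α * SX α * SZ α ^ (j+1) := by
      rw [mul_assoc, ← pow_succ]
    rw [add_mul, smul_mul_assoc, smul_mul_assoc, e1, e2, smul_mul_assoc, e2]
    rw [show bfun α (j+1) = α⁻¹ * bfun α j + α⁻¹ * α ^ (2*j) from rfl]
    match_scalars <;> ring

lemma core (hα : α ≠ 0) (j : ℕ) :
    (SY α ^ j * SZ α ^ j) * (SX α * (SY α * SZ α)) =
      (α⁻¹) ^ j • (SX α * (SY α ^ (j+1) * SZ α ^ (j+1)))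
      + ((α⁻¹) ^ (2*j) * bfun α j) •
          (SX α * (SX α * SX α * (SY α ^ j * SZ α ^ j))) := by
  calc (SY α ^ j * SZ α ^ j) * (SX α * (SY α * SZ α))
      = (SY α ^ j * SZ α ^ j * SX α) * (SY α * SZ α) := by rw [← mul_assoc]
    _ = (SX α * (SY α ^ j * SZ α ^ j)) * (SY α * SZ α) := by rw [YZpowX hα]
    _ = SX α * (SY α ^ j * (SZ α ^ j * (SY α * SZ α))) := by rw [mul_assoc, mul_assoc]
    _ = SX α * (SY α ^ j * ((α⁻¹) ^ j • (SY α * SZ α ^ (j+1))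
          + bfun α j • (SX α * SX α * SZ α ^ j))) := by rw [ZpowYZ hα]
    _ = (α⁻¹) ^ j • (SX α * (SY α ^ j * (SY α * SZ α ^ (j+1))))
          + bfun α j • (SX α * (SY α ^ j * (SX α * SX α * SZ α ^ j))) := by
        rw [mul_add, mul_smul_comm, mul_smul_comm, mul_add, mul_smul_comm, mul_smul_comm]
    _ = (α⁻¹) ^ j • (SX α * (SY α ^ (j+1) * SZ α ^ (j+1)))
          + bfun α j • (SX α * (SY α ^ j * (SX α * SX α * SZ α ^ j))) := by
        rw [show SY α ^ j * (SY α * SZ α ^ (j+1)) = SY α ^ (j+1) * SZ α ^ (j+1) by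
          rw [← mul_assoc, ← pow_succ]]
    _ = (α⁻¹) ^ j • (SX α * (SY α ^ (j+1) * SZ α ^ (j+1)))
          + ((α⁻¹) ^ (2*j) * bfun α j) •
              (SX α * (SX α * SX α * (SY α ^ j * SZ α ^ j))) := by
        rw [show SY α ^ j * (SX α * SX α * SZ α ^ j)
              = ((α⁻¹) ^ j * (α⁻¹) ^ j) • (SX α * SX α * (SY α ^ j * SZ α ^ j)) by
          rw [← mul_assoc, YpowXX hα, smul_mul_assoc, mul_assoc]]
        rw [mul_smul_comm, smul_smul]
        congr 2
        rw [two_mul, pow_add]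
        ring


lemma Xmul (a : ℕ) (w : RingQuot (SRel α)) :
    SX α ^ a * (SX α * w) = SX α ^ (a+1) * w := by
  rw [← mul_assoc, ← pow_succ]

lemma Mg (hα : α ≠ 0) (a j : ℕ) :
    SX α ^ a * SY α ^ j * SZ α ^ j * SG α
      = (α⁻¹) ^ j • (SX α ^ (a+1) * SY α ^ (j+1) * SZ α ^ (j+1))
        + ((1 - α ^ 3)⁻¹ + (α⁻¹) ^ (2*j) * bfun α j) •
            (SX α ^ (a+3) * SY α ^ j * SZ α ^ j) := by
  have hcomm : Commute (SX α) (SY α ^ j * SZ α ^ j) := (YZpowX hα j).symm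
  have ea3 : a + 1 + 1 + 1 = a + 3 := by omega
  have h3 : SX α ^ a * SY α ^ j * SZ α ^ j * SX α ^ 3
      = SX α ^ (a+3) * SY α ^ j * SZ α ^ j := by
    calc SX α ^ a * SY α ^ j * SZ α ^ j * SX α ^ 3
        = SX α ^ a * ((SY α ^ j * SZ α ^ j) * SX α ^ 3) := by
          rw [mul_assoc (SX α ^ a), mul_assoc]
      _ = SX α ^ a * (SX α ^ 3 * (SY α ^ j * SZ α ^ j)) := by
          rw [← (hcomm.pow_left 3).eq]
      _ = SX α ^ (a+3) * SY α ^ j * SZ α ^ j := by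
          rw [← mul_assoc, ← pow_add, ← mul_assoc]
  have h1 : SX α ^ a * SY α ^ j * SZ α ^ j * (SX α * SY α * SZ α)
      = (α⁻¹) ^ j • (SX α ^ (a+1) * SY α ^ (j+1) * SZ α ^ (j+1))
        + ((α⁻¹) ^ (2*j) * bfun α j) • (SX α ^ (a+3) * SY α ^ j * SZ α ^ j) := by
    calc SX α ^ a * SY α ^ j * SZ α ^ j * (SX α * SY α * SZ α)
        = SX α ^ a * ((SY α ^ j * SZ α ^ j) * (SX α * (SY α * SZ α))) := by
          rw [mul_assoc (SX α ^ a) (SY α ^ j) (SZ α ^ j),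
            mul_assoc (SX α) (SY α) (SZ α), mul_assoc]
      _ = SX α ^ a * ((α⁻¹) ^ j • (SX α * (SY α ^ (j+1) * SZ α ^ (j+1)))
            + ((α⁻¹) ^ (2*j) * bfun α j) •
                (SX α * (SX α * SX α * (SY α ^ j * SZ α ^ j)))) := by
          rw [core hα]
      _ = (α⁻¹) ^ j • (SX α ^ a * (SX α * (SY α ^ (j+1) * SZ α ^ (j+1))))
            + ((α⁻¹) ^ (2*j) * bfun α j) •
                (SX α ^ a * (SX α * (SX α * SX α * (SY α ^ j * SZ α ^ j)))) := by
          rw [mul_add, mul_smul_comm, mul_smul_comm]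
      _ = (α⁻¹) ^ j • (SX α ^ (a+1) * SY α ^ (j+1) * SZ α ^ (j+1))
            + ((α⁻¹) ^ (2*j) * bfun α j) • (SX α ^ (a+3) * SY α ^ j * SZ α ^ j) := by
          rw [show SX α ^ a * (SX α * (SY α ^ (j+1) * SZ α ^ (j+1)))
                = SX α ^ (a+1) * SY α ^ (j+1) * SZ α ^ (j+1) by
              rw [Xmul, ← mul_assoc]]
          rw [show SX α ^ a * (SX α * (SX α * SX α * (SY α ^ j * SZ α ^ j)))
                = SX α ^ (a+3) * SY α ^ j * SZ α ^ j by
              rw [Xmul, mul_assoc (SX α) (SX α) (SY α ^ j * SZ α ^ j), Xmul, Xmul,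
                ea3, ← mul_assoc]]
  rw [SG, mul_add, mul_smul_comm, h3, h1]
  match_scalars <;> ring


def kap (α : k) : ℕ → ℕ → k
  | 0 => fun j => if j = 0 then 1 else 0
  | n + 1 => fun j =>
      (if j = 0 then 0 else (α⁻¹) ^ (j - 1) * kap α n (j - 1))
        + ((1 - α ^ 3)⁻¹ + (α⁻¹) ^ (2*j) * bfun α j) * kap α n j

lemma kap_succ (α : k) (n j : ℕ) :
    kap α (n+1) j =
      (if j = 0 then 0 else (α⁻¹) ^ (j - 1) * kap α n (j - 1))
        + ((1 - α ^ 3)⁻¹ + (α⁻¹) ^ (2*j) * bfun α j) * kap α n j := rfl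

lemma kap_of_lt (α : k) (n j : ℕ) (h : n < j) : kap α n j = 0 := by
  induction n generalizing j with
  | zero => simp [kap, show j ≠ 0 by omega]
  | succ n ih =>
    simp [kap_succ, show j ≠ 0 by omega, ih (j-1) (by omega), ih j (by omega)]

lemma kap_first (α : k) (n : ℕ) : kap α n 0 = ((1 - α ^ 3)⁻¹) ^ n := by
  induction n with
  | zero => simp [kap]
  | succ n ih =>
    rw [kap_succ, if_pos rfl, ih, show bfun α 0 = (0:k) from rfl]
    ring

lemma tri (n : ℕ) : n * (n - 1) / 2 + n = (n + 1) * n / 2 := by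
  rcases n with _ | m
  · rfl
  · obtain ⟨r, hr⟩ := Nat.even_mul_succ_self m
    have h1 : (m + 1) * (m + 1 - 1) = r + r := by
      rw [Nat.add_sub_cancel, mul_comm]; exact hr
    have h2 : (m + 1 + 1) * (m + 1) = r + r + 2 * (m + 1) := by
      have : (m + 1 + 1) * (m + 1) = m * (m + 1) + 2 * (m + 1) := by ring
      rw [this, hr]
    rw [h1, h2]
    omega

lemma kap_last {α : k} (hα : α ≠ 0) (n : ℕ) :
    kap α n n = (α⁻¹) ^ (n * (n - 1) / 2) := by
  induction n with
  | zero => simp [kap]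
  | succ n ih =>
    rw [kap_succ, if_neg (by omega), Nat.add_sub_cancel, ih,
      kap_of_lt α n (n+1) (by omega), mul_zero, add_zero, ← pow_add,
      show n + n * (n - 1) / 2 = (n+1) * n / 2 by rw [Nat.add_comm]; exact tri n]

lemma expand {α : k} (hα : α ≠ 0) (n : ℕ) :
    SG α ^ n = ∑ j ∈ Finset.range (n + 1),
      kap α n j • (SX α ^ (3 * n - 2 * j) * SY α ^ j * SZ α ^ j) := by
  induction n with
  | zero => simp [kap]
  | succ n ih =>
    rw [pow_succ, ih, Finset.sum_mul]
    have hterm : ∀ j ∈ Finset.range (n + 1),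
        (kap α n j • (SX α ^ (3 * n - 2 * j) * SY α ^ j * SZ α ^ j)) * SG α
          = ((α⁻¹) ^ j * kap α n j) •
              (SX α ^ (3 * (n+1) - 2 * (j+1)) * SY α ^ (j+1) * SZ α ^ (j+1))
            + (((1 - α ^ 3)⁻¹ + (α⁻¹) ^ (2*j) * bfun α j) * kap α n j) •
              (SX α ^ (3 * (n+1) - 2 * j) * SY α ^ j * SZ α ^ j) := by
      intro j hj
      have hj' : j ≤ n := by simpa [Nat.lt_succ_iff] using hj
      rw [smul_mul_assoc, Mg hα, show 3 * n - 2 * j + 1 = 3 * (n+1) - 2 * (j+1) by omega,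
        show 3 * n - 2 * j + 3 = 3 * (n+1) - 2 * j by omega, smul_add, smul_smul, smul_smul]
      rw [mul_comm (kap α n j) ((α⁻¹) ^ j),
        mul_comm (kap α n j) ((1 - α ^ 3)⁻¹ + (α⁻¹) ^ (2*j) * bfun α j)]
    rw [Finset.sum_congr rfl hterm, Finset.sum_add_distrib]
    have hsplit : ∑ j ∈ Finset.range (n + 1 + 1),
        kap α (n+1) j • (SX α ^ (3 * (n+1) - 2 * j) * SY α ^ j * SZ α ^ j)
        = (∑ j ∈ Finset.range (n + 1 + 1),
            (if j = 0 then 0 else (α⁻¹) ^ (j - 1) * kap α n (j - 1)) •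
              (SX α ^ (3 * (n+1) - 2 * j) * SY α ^ j * SZ α ^ j))
          + ∑ j ∈ Finset.range (n + 1 + 1),
            (((1 - α ^ 3)⁻¹ + (α⁻¹) ^ (2*j) * bfun α j) * kap α n j) •
              (SX α ^ (3 * (n+1) - 2 * j) * SY α ^ j * SZ α ^ j) := by
      rw [← Finset.sum_add_distrib]
      exact Finset.sum_congr rfl fun j _ => by rw [← add_smul, kap_succ]
    rw [hsplit]
    congr 1
    · rw [Finset.sum_range_succ' _ (n+1)]
      simp [Nat.add_sub_cancel]
    · conv_rhs => rw [Finset.sum_range_succ]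
      rw [kap_of_lt α n (n+1) (by omega), mul_zero, zero_smul, add_zero]

end StmtAux

theorem stmt8 {k : Type} [Field k] [IsAlgClosed k] [CharZero k] (α : k)
    (hα : α ≠ 0) (hα3 : α ^ 3 ≠ 1) (n : ℕ) (hn : 1 ≤ n) :
    ∃ κ : ℕ → k,
      (SG α) ^ n =
        ∑ j ∈ Finset.range (n + 1),
          κ j • ((SX α) ^ (3 * n - 2 * j) * (SY α) ^ j * (SZ α) ^ j) ∧
      κ n = (α⁻¹) ^ (n * (n - 1) / 2) ∧
      κ 0 = ((1 - α ^ 3)⁻¹) ^ n :=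
  ⟨StmtAux.kap α n, StmtAux.expand hα n, StmtAux.kap_last hα n, StmtAux.kap_first α n⟩
end
end

section
/- In the algebra A' = k⟨x,y,z⟩/(yz−αzy+x², zx−αxz, xy−αyx) with α³ ≠ 0,1, the coefficients κ^n defined by g^n = ∑_{j=0}^{n} κ^n_j·x^{3n−2j}y^jz^j (where g = xyz + (1−α³)⁻¹x³) satisfy the recursion κ^{n+1}_j = α^{−j+1}·κ^n_{j−1} + α^{−3j}·(1−α³)^{−1}·κ^n_j for 0 ≤ j ≤ n+1, with the conventions κ^n_{−1} = κ^n_{n+1} = 0. -/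
noncomputable section

/-!
Right multiplication by `g` acts on the monomials `x^a y^j z^j` as
`x^a y^j z^j g = α^{-j} x^{a+1} y^{j+1} z^{j+1} + α^{-3j} (1-α³)⁻¹ x^{a+3} y^j z^j`.
Pushing `x y z` through `y^j z^j` costs `α^{-j}` and, by
`z^j y z = α^{-j} (y z^{j+1} + S_j x² z^j)` with `S_j = ∑_{ν<j} α^{3ν}`, leaves a correction
term `α^{-3j} S_j x^{a+3} y^j z^j`; it merges with the contribution of `(1-α³)⁻¹ x³` since
`α^{-3j} S_j + (1-α³)⁻¹ = α^{-3j} (1-α³)⁻¹`. Multiplying the expansion of `gⁿ` by `g` and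
collecting terms then gives the recursion for `κ`.
-/

section QCommute

variable {k R : Type*} [CommSemiring k] [Semiring R] [Algebra k R] {a b : R} {q : k}

theorem pow_mul_of_mul_eq_smul (h : b * a = q • (a * b)) (j : ℕ) :
    b ^ j * a = q ^ j • (a * b ^ j) := by
  induction j with
  | zero => simp
  | succ j ih =>
    rw [pow_succ, mul_assoc, h, mul_smul_comm, ← mul_assoc, ih, smul_mul_assoc, smul_smul,
      mul_assoc, ← pow_succ, ← pow_succ']

theorem mul_pow_of_mul_eq_smul (h : b * a = q • (a * b)) (m : ℕ) :
    b * a ^ m = q ^ m • (a ^ m * b) := by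
  induction m with
  | zero => simp
  | succ m ih =>
    rw [pow_succ, ← mul_assoc, ih, smul_mul_assoc, mul_assoc, h, mul_smul_comm, smul_smul,
      ← mul_assoc, ← pow_succ, ← pow_succ]

theorem pow_mul_pow_of_mul_eq_smul (h : b * a = q • (a * b)) (j m : ℕ) :
    b ^ j * a ^ m = q ^ (j * m) • (a ^ m * b ^ j) := by
  rw [pow_mul]
  exact mul_pow_of_mul_eq_smul (pow_mul_of_mul_eq_smul h j) m

end QCommute

namespace TypeSPrime

open Finset

variable {k : Type} [Field k] {α : k}

variable (α) in
theorem SY_mul_SZ : SY α * SZ α = α • (SZ α * SY α) - SX α * SX α := by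
  simpa [SX, SY, SZ] using RingQuot.mkAlgHom_rel k (SRel.g1 (α := α))

variable (α) in
theorem SZ_mul_SX : SZ α * SX α = α • (SX α * SZ α) := by
  simpa [SX, SZ] using RingQuot.mkAlgHom_rel k (SRel.g2 (α := α))

theorem SY_mul_SX (hα : α ≠ 0) : SY α * SX α = α⁻¹ • (SX α * SY α) := by
  have h : SX α * SY α = α • (SY α * SX α) := by
    simpa [SX, SY] using RingQuot.mkAlgHom_rel k (SRel.g3 (α := α))
  rw [h, inv_smul_smul₀ hα]

theorem SZ_mul_SY (hα : α ≠ 0) : SZ α * SY α = α⁻¹ • (SY α * SZ α + SX α ^ 2) := by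
  rw [SY_mul_SZ, pow_two, sub_add_cancel, inv_smul_smul₀ hα]

-- The formula `z^j y = α^{-j} y z^j + α^{-j} S_j x² z^{j-1}`, multiplied by `z` to hold at `j = 0`.
theorem SZ_pow_mul_SY_mul_SZ (hα : α ≠ 0) (j : ℕ) :
    SZ α ^ j * (SY α * SZ α) =
      α⁻¹ ^ j •
        (SY α * SZ α ^ (j + 1) + (∑ ν ∈ range j, (α ^ 3) ^ ν) • (SX α ^ 2 * SZ α ^ j)) := by
  induction j with
  | zero => simp
  | succ j ih =>
    have hzx2 : SZ α * SX α ^ 2 = α ^ 2 • (SX α ^ 2 * SZ α) :=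
      mul_pow_of_mul_eq_smul (SZ_mul_SX α) 2
    rw [pow_succ', mul_assoc, ih]
    simp only [mul_smul_comm, mul_add, ← mul_assoc, SZ_mul_SY hα, hzx2]
    simp only [smul_mul_assoc, add_mul, mul_assoc, ← pow_succ', smul_add, smul_smul,
      geom_sum_succ]
    match_scalars <;> simp only [inv_pow] <;> field_simp <;> ring

variable (α) in
def SMon (a j : ℕ) : RingQuot (SRel α) := SX α ^ a * SY α ^ j * SZ α ^ j

theorem SMon_mul_SX_pow_three (hα : α ≠ 0) (a j : ℕ) :
    SMon α a j * SX α ^ 3 = SMon α (a + 3) j := by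
  have hzx := pow_mul_pow_of_mul_eq_smul (SZ_mul_SX α) j 3
  have hyx := pow_mul_pow_of_mul_eq_smul (SY_mul_SX hα) j 3
  calc SMon α a j * SX α ^ 3 = SX α ^ a * SY α ^ j * (SZ α ^ j * SX α ^ 3) := by
        rw [SMon, mul_assoc]
    _ = (α ^ (j * 3) * α⁻¹ ^ (j * 3)) • SMon α (a + 3) j := by
        rw [hzx, mul_smul_comm, mul_assoc (SX α ^ a), ← mul_assoc (SY α ^ j), hyx]
        simp only [SMon, smul_mul_assoc, mul_smul_comm, smul_smul, mul_assoc, pow_add]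
    _ = SMon α (a + 3) j := by rw [← mul_pow, mul_inv_cancel₀ hα, one_pow, one_smul]

theorem SMon_mul_SX_mul_SY_mul_SZ (hα : α ≠ 0) (a j : ℕ) :
    SMon α a j * (SX α * SY α * SZ α) =
      α⁻¹ ^ j • SMon α (a + 1) (j + 1) +
        (α⁻¹ ^ (3 * j) * ∑ ν ∈ range j, (α ^ 3) ^ ν) • SMon α (a + 3) j := by
  have hzx := pow_mul_of_mul_eq_smul (SZ_mul_SX α) j
  have hyx := pow_mul_of_mul_eq_smul (SY_mul_SX hα) j
  have hyx2 := pow_mul_pow_of_mul_eq_smul (SY_mul_SX hα) j 2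
  calc SMon α a j * (SX α * SY α * SZ α)
      = SX α ^ a * (SY α ^ j * (SZ α ^ j * SX α)) * (SY α * SZ α) := by
        simp only [SMon, mul_assoc]
    _ = (α ^ j * α⁻¹ ^ j) •
          (SX α ^ (a + 1) * SY α ^ j * (SZ α ^ j * (SY α * SZ α))) := by
        rw [hzx, mul_smul_comm, ← mul_assoc (SY α ^ j), hyx]
        simp only [smul_mul_assoc, mul_smul_comm, smul_smul, mul_assoc, pow_succ]
    _ = α⁻¹ ^ j • (SX α ^ (a + 1) * SY α ^ j * (SY α * SZ α ^ (j + 1)) +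
          (∑ ν ∈ range j, (α ^ 3) ^ ν) •
            (SX α ^ (a + 1) * (SY α ^ j * SX α ^ 2) * SZ α ^ j)) := by
        rw [← mul_pow, mul_inv_cancel₀ hα, one_pow, one_smul, SZ_pow_mul_SY_mul_SZ hα]
        simp only [mul_add, mul_smul_comm, mul_assoc]
    _ = _ := by
        rw [hyx2, SMon, SMon, pow_succ (SY α) j, show a + 3 = a + 1 + 2 by omega,
          pow_add (SX α) (a + 1) 2]
        simp only [smul_add, smul_mul_assoc, mul_smul_comm, smul_smul, mul_assoc]
        match_scalars <;> ring

theorem SMon_mul_SG (hα : α ≠ 0) (hα3 : α ^ 3 ≠ 1) (a j : ℕ) :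
    SMon α a j * SG α =
      α ^ (-(j : ℤ)) • SMon α (a + 1) (j + 1) +
        (α ^ (-(3 : ℤ) * j) * (1 - α ^ 3)⁻¹) • SMon α (a + 3) j := by
  have hgeom : (∑ ν ∈ range j, (α ^ 3) ^ ν) * (1 - α ^ 3) = 1 - (α ^ 3) ^ j :=
    geom_sum_mul_neg _ _
  have hα3' : 1 - α ^ 3 ≠ 0 := sub_ne_zero.mpr hα3.symm
  rw [SG, mul_add, mul_smul_comm, SMon_mul_SX_mul_SY_mul_SZ hα, SMon_mul_SX_pow_three hα,
    show -(3 : ℤ) * j = -((3 * j : ℕ) : ℤ) by push_cast; ring, zpow_neg, zpow_neg,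
    zpow_natCast, zpow_natCast, ← inv_pow, ← inv_pow]
  match_scalars
  · ring
  · simp only [inv_pow]
    field_simp
    rw [hgeom, ← pow_mul]
    ring

variable (α) in
def kappa : ℕ → ℕ → k
  | 0, j => if j = 0 then 1 else 0
  | n + 1, j =>
    α ^ (1 - (j : ℤ)) * (if j = 0 then 0 else kappa n (j - 1)) +
      α ^ (-(3 : ℤ) * j) * (1 - α ^ 3)⁻¹ * kappa n j

theorem kappa_eq_zero_of_lt {n j : ℕ} (h : n < j) : kappa α n j = 0 := by
  induction n generalizing j with
  | zero => simp [kappa, h.ne']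
  | succ n ih => simp [kappa, ih (by omega : n < j), ih (by omega : n < j - 1)]

theorem SG_pow_eq_sum (hα : α ≠ 0) (hα3 : α ^ 3 ≠ 1) (n : ℕ) :
    SG α ^ n = ∑ j ∈ range (n + 1), kappa α n j • SMon α (3 * n - 2 * j) j := by
  induction n with
  | zero => simp [kappa, SMon]
  | succ n ih =>
    have hmul : ∀ j ∈ range (n + 1), kappa α n j • SMon α (3 * n - 2 * j) j * SG α =
        (α ^ (1 - ((j + 1 : ℕ) : ℤ)) * kappa α n j) •
            SMon α (3 * (n + 1) - 2 * (j + 1)) (j + 1) +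
          (α ^ (-(3 : ℤ) * j) * (1 - α ^ 3)⁻¹ * kappa α n j) •
            SMon α (3 * (n + 1) - 2 * j) j := by
      intro j hj
      have hjn : j ≤ n := Nat.lt_succ_iff.mp (mem_range.mp hj)
      rw [smul_mul_assoc, SMon_mul_SG hα hα3,
        show 3 * n - 2 * j + 1 = 3 * (n + 1) - 2 * (j + 1) by omega,
        show 3 * n - 2 * j + 3 = 3 * (n + 1) - 2 * j by omega, smul_add, smul_smul, smul_smul,
        show 1 - ((j + 1 : ℕ) : ℤ) = -(j : ℤ) by push_cast; ring]
      congr 2 <;> ring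
    rw [pow_succ, ih, sum_mul, sum_congr rfl hmul, sum_add_distrib]
    simp only [kappa, add_smul, sum_add_distrib]
    rw [sum_range_succ' _ (n + 1), sum_range_succ _ (n + 1),
      kappa_eq_zero_of_lt (Nat.lt_succ_self n)]
    simp

end TypeSPrime

theorem stmt9_general {k : Type} [Field k] (α : k)
    (hα : α ≠ 0) (hα3 : α ^ 3 ≠ 1) :
    ∃ κ : ℕ → ℕ → k,
      (∀ n : ℕ, 1 ≤ n →
        (SG α) ^ n =
          ∑ j ∈ Finset.range (n + 1),
            κ n j • ((SX α) ^ (3 * n - 2 * j) * (SY α) ^ j * (SZ α) ^ j)) ∧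
      (∀ n j : ℕ, n < j → κ n j = 0) ∧
      (∀ n j : ℕ, j ≤ n + 1 →
        κ (n + 1) j =
          α ^ (1 - (j : ℤ)) * (if j = 0 then 0 else κ n (j - 1)) +
            α ^ (-(3 : ℤ) * j) * (1 - α ^ 3)⁻¹ * κ n j) :=
  ⟨TypeSPrime.kappa α, fun n _ => TypeSPrime.SG_pow_eq_sum hα hα3 n,
    fun _ _ => TypeSPrime.kappa_eq_zero_of_lt, fun _ _ _ => rfl⟩

theorem stmt9 {k : Type} [Field k] [IsAlgClosed k] [CharZero k] (α : k)
    (hα : α ≠ 0) (hα3 : α ^ 3 ≠ 1) :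
    ∃ κ : ℕ → ℕ → k,
      (∀ n : ℕ, 1 ≤ n →
        (SG α) ^ n =
          ∑ j ∈ Finset.range (n + 1),
            κ n j • ((SX α) ^ (3 * n - 2 * j) * (SY α) ^ j * (SZ α) ^ j)) ∧
      (∀ n j : ℕ, n < j → κ n j = 0) ∧
      (∀ n j : ℕ, j ≤ n + 1 →
        κ (n + 1) j =
          α ^ (1 - (j : ℤ)) * (if j = 0 then 0 else κ n (j - 1)) +
            α ^ (-(3 : ℤ) * j) * (1 - α ^ 3)⁻¹ * κ n j) :=
  stmt9_general α hα hα3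
end
end

section
/- Let α ∈ k be a primitive ℓ-th root of unity, λ ∈ k \ {0}, η ∈ k \ {0}. Define the ℓ×ℓ matrices U_λ = λ·diag(α, α², …, α^ℓ) and W_{λ,η} with diagonal entries (W_{λ,η})_{jj} = 1/((1−α)α^j λ) for 1 ≤ j ≤ ℓ, superdiagonal entries 1, corner entry (W_{λ,η})_{ℓ,1} = η, and all other entries 0. Then the pair (U_λ, W_{λ,η}) satisfies the quantized Weyl relation W_{λ,η}·U_λ − α·U_λ·W_{λ,η} = I. -/
theorem stmt17 {k : Type} [Field k] [IsAlgClosed k] [CharZero k] (α : k) (ℓ : ℕ)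
    (hprim : IsPrimitiveRoot α ℓ) (hα1 : α ≠ 1)
    (lam : k) (hlam : lam ≠ 0) (η : k) (hη : η ≠ 0) :
    let U : Matrix (Fin ℓ) (Fin ℓ) k :=
      Matrix.diagonal fun i => lam * α ^ ((i : ℕ) + 1)
    let W : Matrix (Fin ℓ) (Fin ℓ) k :=
      Matrix.of fun i j =>
        if (j : ℕ) = (i : ℕ) + 1 then 1
        else if i = j then ((1 - α) * α ^ ((i : ℕ) + 1) * lam)⁻¹
        else if (i : ℕ) = ℓ - 1 ∧ (j : ℕ) = 0 then η
        else 0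
    W * U - α • (U * W) = 1 := by
  intro U W
  ext i j
  have hℓ : 0 < ℓ := i.pos
  have hroot : α ^ ℓ = 1 := hprim.pow_eq_one
  have hα0 : α ≠ 0 := by
    intro h
    rw [h, zero_pow hℓ.ne'] at hroot
    exact zero_ne_one hroot
  have h1α : (1 : k) - α ≠ 0 := sub_ne_zero.mpr (Ne.symm hα1)
  simp only [U, W, Matrix.sub_apply, Matrix.smul_apply, Matrix.mul_diagonal,
    Matrix.diagonal_mul, Matrix.of_apply, Matrix.one_apply, smul_eq_mul]
  by_cases h1 : (j : ℕ) = (i : ℕ) + 1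
  · have hij : i ≠ j := by
      intro h; rw [h] at h1; omega
    simp only [h1, if_pos rfl, hij, if_neg hij, if_false]
    ring
  · rw [if_neg h1]
    by_cases h2 : i = j
    · subst h2
      simp only [if_pos rfl, ite_true]
      field_simp
    · rw [if_neg h2, if_neg h2]
      by_cases h3 : (i : ℕ) = ℓ - 1 ∧ (j : ℕ) = 0
      · rw [if_pos h3]
        have hi : (i : ℕ) + 1 = ℓ := by omega
        rw [h3.2, hi, hroot]
        ring
      · rw [if_neg h3]
        ring
end
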